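/- Let f : ℝ^d → ℝ be L₁-smooth, let x ∈ ℝ^d, let 0 < μ ≤ μ′, and let u, u′ be independent ℝ^d-valued random vectors each with law γ_d. Then E[(f(x + μu) − f(x + μ′u′))² · ‖u‖²] ≤ 8 μ′² (d+4)² ‖∇f(x)‖² + 2 L₁² μ′⁴ (d+6)³. -/

import Mathlib

/-!
The descent lemma `|f y - f x - ⟪∇f x, y - x⟫| ≤ L₁/2 ‖y - x‖²` bounds
`(f(x + μu) - f(x + μ'u'))²` by `4μ'²‖∇f x‖²(‖u‖² + ‖u'‖²) + L₁²μ'⁴(‖u‖⁴ + ‖u'‖⁴)`.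
After multiplying by `‖u‖²` and integrating against `γ_d ⊗ γ_d`, the joint law of `(u, u')`,
only the moments `E‖u‖² = d`, `E‖u‖⁴ = d(d+2)`, `E‖u‖⁶ = d(d+2)(d+4)` remain. These follow by
induction on `d` from the one-dimensional moments `1, 3, 15`, which come from Gaussian
integration by parts.
-/

open MeasureTheory ProbabilityTheory Real Finset
open scoped RealInnerProductSpace

noncomputable section

/-- `d`-dimensional Euclidean space with the Euclidean norm. -/
abbrev Euc (d : ℕ) := EuclideanSpace ℝ (Fin d)

/-- The standard Gaussian measure `γ_d` on `ℝ^d`: the joint law of `d` independent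
standard normal coordinates. -/
def stdGaussian (d : ℕ) : MeasureTheory.Measure (Euc d) :=
  (MeasureTheory.Measure.pi fun _ : Fin d => ProbabilityTheory.gaussianReal 0 1).map
    (MeasurableEquiv.toLp 2 (Fin d → ℝ))

/-- The Gaussian smoothing `f^s(x) = ∫ f(x + μ u) dγ_d(u)` of `f`. -/
def gaussSmooth {d : ℕ} (f : Euc d → ℝ) (μ : ℝ) (x : Euc d) : ℝ :=
  ∫ u, f (x + μ • u) ∂(stdGaussian d)

local notation "γ[" n "]" => Measure.pi fun _ : Fin n ↦ gaussianReal 0 1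

lemma gaussianPDFReal_zero_one (x : ℝ) :
    gaussianPDFReal 0 1 x = (√(2 * π))⁻¹ * rexp (-2⁻¹ * x ^ 2) := by
  simp only [gaussianPDFReal, NNReal.coe_one, mul_one, sub_zero]
  ring_nf

lemma hasDerivAt_gaussianPDFReal_zero_one (x : ℝ) :
    HasDerivAt (gaussianPDFReal 0 1) (-x * gaussianPDFReal 0 1 x) x := by
  have h := (((hasDerivAt_pow 2 x).const_mul (-2⁻¹ : ℝ)).exp).const_mul (√(2 * π))⁻¹
  rw [show gaussianPDFReal 0 1 = _ from funext gaussianPDFReal_zero_one]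
  exact h.congr_deriv (by push_cast; ring)

lemma integrable_pow_mul_gaussianPDFReal_zero_one (n : ℕ) :
    Integrable fun x : ℝ ↦ x ^ n * gaussianPDFReal 0 1 x := by
  have h := (integrable_rpow_mul_exp_neg_mul_sq (b := 2⁻¹) (by norm_num)
    (s := n) (by linarith [n.cast_nonneg (α := ℝ)])).const_mul (√(2 * π))⁻¹
  simp only [rpow_natCast] at h
  refine h.congr (.of_forall fun x ↦ ?_)
  simp only [gaussianPDFReal_zero_one]; ring

-- Integration by parts against `x φ(x) = -φ'(x)`.
lemma integral_pow_add_two_gaussianReal (n : ℕ) :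
    ∫ x, x ^ (n + 2) ∂gaussianReal 0 1 = (n + 1) * ∫ x, x ^ n ∂gaussianReal 0 1 := by
  set φ := gaussianPDFReal 0 1
  have hu (x : ℝ) : HasDerivAt (· ^ (n + 1)) ((n + 1 : ℝ) * x ^ n) x := by
    simpa using hasDerivAt_pow (n + 1) x
  have hv (x : ℝ) : HasDerivAt (fun y ↦ -φ y) (x * φ x) x :=
    (hasDerivAt_gaussianPDFReal_zero_one x).neg.congr_deriv (by ring)
  have parts := integral_mul_deriv_eq_deriv_mul_of_integrable (fun x _ ↦ hu x) (fun x _ ↦ hv x)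
    ((integrable_pow_mul_gaussianPDFReal_zero_one (n + 2)).congr
      (.of_forall fun x ↦ by simp only [Pi.mul_apply]; ring))
    (((integrable_pow_mul_gaussianPDFReal_zero_one n).const_mul (-(n + 1 : ℝ))).congr
      (.of_forall fun x ↦ by simp only [Pi.mul_apply]; ring))
    ((integrable_pow_mul_gaussianPDFReal_zero_one (n + 1)).neg.congr
      (.of_forall fun x ↦ by simp only [Pi.mul_apply, Pi.neg_apply]; ring))
  simp_rw [integral_gaussianReal_eq_integral_smul one_ne_zero, smul_eq_mul, ← integral_const_mul]
  convert parts using 1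
  · congr 1 with x; ring
  · rw [← integral_neg]; congr 1 with x; ring

lemma integral_sq_gaussianReal : ∫ x, x ^ 2 ∂gaussianReal 0 1 = 1 := by
  simpa using integral_pow_add_two_gaussianReal 0

lemma integral_pow_four_gaussianReal : ∫ x, x ^ 4 ∂gaussianReal 0 1 = 3 := by
  rw [integral_pow_add_two_gaussianReal 2, integral_sq_gaussianReal]; norm_num

lemma integral_pow_six_gaussianReal : ∫ x, x ^ 6 ∂gaussianReal 0 1 = 15 := by
  rw [integral_pow_add_two_gaussianReal 4, integral_pow_four_gaussianReal]; norm_num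

lemma integral_add_pow_prod {α β : Type*} [MeasurableSpace α] [MeasurableSpace β]
    {μ : Measure α} {ν : Measure β} [IsFiniteMeasure μ] [IsFiniteMeasure ν] {f : α → ℝ} {g : β → ℝ}
    (hf : ∀ j : ℕ, Integrable (fun a ↦ f a ^ j) μ) (hg : ∀ j : ℕ, Integrable (fun b ↦ g b ^ j) ν)
    (k : ℕ) :
    ∫ p, (f p.1 + g p.2) ^ k ∂(μ.prod ν)
      = ∑ j ∈ range (k + 1), (k.choose j : ℝ) * (∫ a, f a ^ j ∂μ) * ∫ b, g b ^ (k - j) ∂ν := by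
  simp_rw [add_pow]
  rw [integral_finsetSum _ fun j _ ↦ ((hf j).mul_prod (hg (k - j))).mul_const _]
  refine sum_congr rfl fun j _ ↦ ?_
  rw [integral_mul_const, integral_prod_mul (fun a ↦ f a ^ j) (fun b ↦ g b ^ (k - j))]
  ring

lemma stdGaussian_eq_stdGaussian (d : ℕ) :
    stdGaussian d = ProbabilityTheory.stdGaussian (Euc d) :=
  map_pi_eq_stdGaussian

instance (d : ℕ) : IsProbabilityMeasure (stdGaussian d) :=
  stdGaussian_eq_stdGaussian d ▸ inferInstance

lemma integrable_norm_pow_stdGaussian (d k : ℕ) :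
    Integrable (fun a : Euc d ↦ ‖a‖ ^ k) (stdGaussian d) := by
  rw [stdGaussian_eq_stdGaussian]
  exact (IsGaussian.memLp_id _ k (by simp)).integrable_norm_pow'

lemma norm_toLp_pow_two_mul {d : ℕ} (y : Fin d → ℝ) (k : ℕ) :
    ‖MeasurableEquiv.toLp 2 (Fin d → ℝ) y‖ ^ (2 * k) = (∑ i, y i ^ 2) ^ k := by
  rw [pow_mul, EuclideanSpace.real_norm_sq_eq]
  rfl

lemma integral_norm_pow_two_mul_stdGaussian (d k : ℕ) :
    ∫ a, ‖a‖ ^ (2 * k) ∂stdGaussian d = ∫ y, (∑ i, y i ^ 2) ^ k ∂γ[d] := by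
  simp_rw [_root_.stdGaussian, integral_map_equiv, norm_toLp_pow_two_mul]

lemma integrable_sum_sq_pow_pi (d k : ℕ) :
    Integrable (fun y : Fin d → ℝ ↦ (∑ i, y i ^ 2) ^ k) γ[d] := by
  have h := integrable_norm_pow_stdGaussian d (2 * k)
  rw [_root_.stdGaussian, integrable_map_equiv] at h
  simpa only [Function.comp_def, norm_toLp_pow_two_mul] using h

lemma integrable_sq_pow_gaussianReal (k : ℕ) :
    Integrable (fun x : ℝ ↦ (x ^ 2) ^ k) (gaussianReal 0 1) := by
  refine (memLp_id_gaussianReal (μ := 0) (v := 1) (2 * k : ℕ)).integrable_norm_pow'.congr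
    (.of_forall fun x ↦ ?_)
  simp [pow_mul]

lemma integral_sum_sq_pow_pi_succ (d k : ℕ) :
    ∫ y, (∑ i, y i ^ 2) ^ k ∂γ[d + 1]
      = ∑ j ∈ range (k + 1), (k.choose j : ℝ) * (∫ x, x ^ (2 * j) ∂gaussianReal 0 1)
        * ∫ y, (∑ i, y i ^ 2) ^ (k - j) ∂γ[d] := by
  have split : ∫ y, (∑ i, y i ^ 2) ^ k ∂γ[d + 1]
      = ∫ p, (p.1 ^ 2 + ∑ i, p.2 i ^ 2) ^ k ∂((gaussianReal 0 1).prod γ[d]) := by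
    rw [← (measurePreserving_piFinSuccAbove (fun _ ↦ gaussianReal 0 1) 0).integral_comp']
    simp [Fin.sum_univ_succ, Fin.insertNthEquiv, Fin.tail]
  rw [split, integral_add_pow_prod integrable_sq_pow_gaussianReal (integrable_sum_sq_pow_pi d)]
  simp_rw [pow_mul]

lemma integral_sum_sq_pi (d : ℕ) :
    ∫ y, ∑ i, y i ^ 2 ∂γ[d] = d := by
  induction d with
  | zero => simp
  | succ d ih =>
    simpa [sum_range_succ, integral_sq_gaussianReal, ih, add_comm]
      using integral_sum_sq_pow_pi_succ d 1

lemma integral_sum_sq_pow_two_pi (d : ℕ) :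
    ∫ y, (∑ i, y i ^ 2) ^ 2 ∂γ[d] = d * (d + 2) := by
  induction d with
  | zero => simp
  | succ d ih =>
    rw [integral_sum_sq_pow_pi_succ]
    simp only [sum_range_succ, range_one, sum_singleton, Nat.choose_zero_right, Nat.choose_self,
      Nat.choose_succ_self_right, Nat.reduceAdd, Nat.reduceMul, Nat.add_one_sub_one, tsub_zero,
      tsub_self, pow_zero, pow_one, integral_const, probReal_univ, smul_eq_mul,
      integral_sq_gaussianReal, integral_pow_four_gaussianReal, integral_sum_sq_pi, ih]
    push_cast
    ring

lemma integral_sum_sq_pow_three_pi (d : ℕ) :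
    ∫ y, (∑ i, y i ^ 2) ^ 3 ∂γ[d]
      = d * (d + 2) * (d + 4) := by
  induction d with
  | zero => simp
  | succ d ih =>
    rw [integral_sum_sq_pow_pi_succ]
    simp only [sum_range_succ, range_one, sum_singleton, Nat.choose_zero_right, Nat.choose_self,
      Nat.choose_one_right, Nat.choose_succ_self_right, Nat.reduceAdd, Nat.reduceMul, Nat.reduceSub,
      Nat.add_one_sub_one, tsub_zero, tsub_self, pow_zero, pow_one, integral_const, probReal_univ,
      smul_eq_mul, integral_sq_gaussianReal, integral_pow_four_gaussianReal,
      integral_pow_six_gaussianReal, integral_sum_sq_pi, integral_sum_sq_pow_two_pi, ih]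
    push_cast
    ring

lemma integral_norm_sq_stdGaussian (d : ℕ) : ∫ a, ‖a‖ ^ 2 ∂stdGaussian d = d := by
  simpa using
    (integral_norm_pow_two_mul_stdGaussian d 1).trans (by simpa using integral_sum_sq_pi d)

lemma integral_norm_pow_four_stdGaussian (d : ℕ) :
    ∫ a, ‖a‖ ^ 4 ∂stdGaussian d = d * (d + 2) :=
  (integral_norm_pow_two_mul_stdGaussian d 2).trans (integral_sum_sq_pow_two_pi d)

lemma integral_norm_pow_six_stdGaussian (d : ℕ) :
    ∫ a, ‖a‖ ^ 6 ∂stdGaussian d = d * (d + 2) * (d + 4) :=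
  (integral_norm_pow_two_mul_stdGaussian d 3).trans (integral_sum_sq_pow_three_pi d)

section LipschitzGradient

variable {E : Type*} [NormedAddCommGroup E] [InnerProductSpace ℝ E] [CompleteSpace E]
  {f : E → ℝ} {L : ℝ} {x : E}

lemma abs_sub_sub_inner_gradient_le (hf : Differentiable ℝ f)
    (hL : ∀ z, ‖gradient f z - gradient f x‖ ≤ L * ‖z - x‖) (y : E) :
    |f y - f x - ⟪gradient f x, y - x⟫| ≤ L / 2 * ‖y - x‖ ^ 2 := by
  set v := y - x
  let g : ℝ → ℝ := fun t ↦ f (x + t • v) - f x - t * ⟪gradient f x, v⟫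
  have hg (t : ℝ) : HasDerivAt g (⟪gradient f (x + t • v), v⟫ - ⟪gradient f x, v⟫) t := by
    have hline : HasDerivAt (fun s : ℝ ↦ x + s • v) v t := by
      simpa using ((hasDerivAt_id t).smul_const v).const_add x
    refine ((((hf _).hasFDerivAt.comp_hasDerivAt t hline).sub_const (f x)).sub
      ((hasDerivAt_id t).mul_const ⟪gradient f x, v⟫)).congr_deriv ?_
    simp [inner_gradient_left]
  have hB (t : ℝ) : HasDerivAt (fun s ↦ L / 2 * s ^ 2 * ‖v‖ ^ 2) (L * t * ‖v‖ ^ 2) t := by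
    refine (((hasDerivAt_pow 2 t).const_mul (L / 2)).mul_const (‖v‖ ^ 2)).congr_deriv ?_
    push_cast; ring
  have bound : ∀ t ∈ Set.Ico (0 : ℝ) 1,
      ‖⟪gradient f (x + t • v), v⟫ - ⟪gradient f x, v⟫‖ ≤ L * t * ‖v‖ ^ 2 := by
    rintro t ⟨ht, -⟩
    calc ‖⟪gradient f (x + t • v), v⟫ - ⟪gradient f x, v⟫‖
        = |⟪gradient f (x + t • v) - gradient f x, v⟫| := by rw [inner_sub_left, norm_eq_abs]
      _ ≤ ‖gradient f (x + t • v) - gradient f x‖ * ‖v‖ := abs_real_inner_le_norm _ _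
      _ ≤ L * ‖t • v‖ * ‖v‖ := by
        gcongr
        simpa using hL (x + t • v)
      _ = L * t * ‖v‖ ^ 2 := by rw [norm_smul, norm_of_nonneg ht]; ring
  have := image_norm_le_of_norm_deriv_right_le_deriv_boundary
    (fun t _ ↦ (hg t).continuousAt.continuousWithinAt) (fun t _ ↦ (hg t).hasDerivWithinAt)
    (by simp [g]) hB bound (Set.right_mem_Icc.2 zero_le_one)
  simpa [g, v] using this

lemma sq_sub_le_of_lipschitz_gradient (hf : Differentiable ℝ f)
    (hL : ∀ z, ‖gradient f z - gradient f x‖ ≤ L * ‖z - x‖) (y : E) :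
    (f y - f x) ^ 2 ≤ 2 * ‖gradient f x‖ ^ 2 * ‖y - x‖ ^ 2 + L ^ 2 / 2 * ‖y - x‖ ^ 4 := by
  have taylor := abs_sub_sub_inner_gradient_le hf hL y
  have linear := abs_real_inner_le_norm (gradient f x) (y - x)
  have h₁ := sq_le_sq' (abs_le.1 taylor).1 (abs_le.1 taylor).2
  have h₂ := sq_le_sq' (abs_le.1 linear).1 (abs_le.1 linear).2
  nlinarith [sq_nonneg (f y - f x - 2 * ⟪gradient f x, y - x⟫)]

lemma sq_sub_smul_sub_smul_le (hf : Differentiable ℝ f)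
    (hL : ∀ z, ‖gradient f z - gradient f x‖ ≤ L * ‖z - x‖) {μ μ' : ℝ} (hμ : 0 ≤ μ)
    (hμμ' : μ ≤ μ') (a b : E) :
    (f (x + μ • a) - f (x + μ' • b)) ^ 2
      ≤ 4 * μ' ^ 2 * ‖gradient f x‖ ^ 2 * (‖a‖ ^ 2 + ‖b‖ ^ 2)
        + L ^ 2 * μ' ^ 4 * (‖a‖ ^ 4 + ‖b‖ ^ 4) := by
  have hμ' : 0 ≤ μ' := hμ.trans hμμ'
  have ha := sq_sub_le_of_lipschitz_gradient hf hL (x + μ • a)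
  have hb := sq_sub_le_of_lipschitz_gradient hf hL (x + μ' • b)
  rw [add_sub_cancel_left, norm_smul, norm_of_nonneg hμ] at ha
  rw [add_sub_cancel_left, norm_smul, norm_of_nonneg hμ'] at hb
  have h₂ : μ ^ 2 * (‖gradient f x‖ ^ 2 * ‖a‖ ^ 2) ≤ μ' ^ 2 * (‖gradient f x‖ ^ 2 * ‖a‖ ^ 2) := by
    gcongr
  have h₄ : μ ^ 4 * (L ^ 2 * ‖a‖ ^ 4) ≤ μ' ^ 4 * (L ^ 2 * ‖a‖ ^ 4) := by gcongr
  nlinarith [sq_nonneg (f (x + μ • a) + f (x + μ' • b) - 2 * f x)]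

end LipschitzGradient

lemma ProbabilityTheory.IndepFun.integral_comp_eq_integral_prod {Ω α β F : Type*}
    [MeasurableSpace Ω] [MeasurableSpace α] [MeasurableSpace β] [NormedAddCommGroup F]
    [NormedSpace ℝ F] {P : Measure Ω} [IsFiniteMeasure P] {X : Ω → α} {Y : Ω → β}
    (hXY : IndepFun X Y P) (hX : AEMeasurable X P) (hY : AEMeasurable Y P) {g : α × β → F}
    (hg : AEStronglyMeasurable g ((P.map X).prod (P.map Y))) :
    ∫ ω, g (X ω, Y ω) ∂P = ∫ p, g p ∂((P.map X).prod (P.map Y)) := by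
  rw [← hXY.map_prod_eq_prod_map_map hX hY] at hg ⊢
  exact (integral_map (hX.prodMk hY) hg).symm

lemma integrable_norm_pow_mul_norm_pow_stdGaussian_prod (d i j : ℕ) :
    Integrable (fun p : Euc d × Euc d ↦ ‖p.1‖ ^ i * ‖p.2‖ ^ j)
      ((stdGaussian d).prod (stdGaussian d)) :=
  (integrable_norm_pow_stdGaussian d i).mul_prod (integrable_norm_pow_stdGaussian d j)

lemma integral_norm_pow_mul_norm_pow_stdGaussian_prod (d i j : ℕ) :
    ∫ p : Euc d × Euc d, ‖p.1‖ ^ i * ‖p.2‖ ^ j ∂((stdGaussian d).prod (stdGaussian d))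
      = (∫ a, ‖a‖ ^ i ∂stdGaussian d) * ∫ a, ‖a‖ ^ j ∂stdGaussian d :=
  integral_prod_mul (fun a : Euc d ↦ ‖a‖ ^ i) (fun a : Euc d ↦ ‖a‖ ^ j)

section MomentBound

variable (d : ℕ) (c₁ c₂ : ℝ)

def momentBound (p : Euc d × Euc d) : ℝ :=
  (c₁ * (‖p.1‖ ^ 2 + ‖p.2‖ ^ 2) + c₂ * (‖p.1‖ ^ 4 + ‖p.2‖ ^ 4)) * ‖p.1‖ ^ 2

lemma momentBound_apply (p : Euc d × Euc d) :
    momentBound d c₁ c₂ p = c₁ * (‖p.1‖ ^ 4 * ‖p.2‖ ^ 0) + c₁ * (‖p.1‖ ^ 2 * ‖p.2‖ ^ 2)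
      + c₂ * (‖p.1‖ ^ 6 * ‖p.2‖ ^ 0) + c₂ * (‖p.1‖ ^ 2 * ‖p.2‖ ^ 4) := by
  simp only [momentBound]; ring

lemma integrable_momentBound :
    Integrable (momentBound d c₁ c₂) ((stdGaussian d).prod (stdGaussian d)) := by
  have I := integrable_norm_pow_mul_norm_pow_stdGaussian_prod d
  simp_rw [funext (momentBound_apply d c₁ c₂)]
  repeat' first | exact (I _ _).const_mul _ | apply Integrable.add

lemma integral_momentBound :
    ∫ p, momentBound d c₁ c₂ p ∂((stdGaussian d).prod (stdGaussian d))
      = c₁ * (d * (d + 2) + d * d) + c₂ * (d * (d + 2) * (d + 4) + d * (d + 2) * d) := by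
  have I := integrable_norm_pow_mul_norm_pow_stdGaussian_prod d
  simp_rw [momentBound_apply]
  rw [integral_add, integral_add, integral_add]
  · simp only [integral_const_mul, integral_norm_pow_mul_norm_pow_stdGaussian_prod,
      integral_norm_sq_stdGaussian, integral_norm_pow_four_stdGaussian,
      integral_norm_pow_six_stdGaussian]
    simp only [pow_zero, integral_const, probReal_univ, smul_eq_mul]
    ring
  all_goals repeat' first | exact (I _ _).const_mul _ | apply Integrable.add

lemma integral_momentBound_le (hc₁ : 0 ≤ c₁) (hc₂ : 0 ≤ c₂) :
    ∫ p, momentBound d c₁ c₂ p ∂((stdGaussian d).prod (stdGaussian d))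
      ≤ 2 * c₁ * ((d : ℝ) + 4) ^ 2 + 2 * c₂ * ((d : ℝ) + 6) ^ 3 := by
  have hd : (0 : ℝ) ≤ d := d.cast_nonneg
  have h₁ : (d : ℝ) * (d + 2) + d * d ≤ 2 * (d + 4) ^ 2 := by nlinarith
  have h₂ : (d : ℝ) * (d + 2) * (d + 4) + d * (d + 2) * d ≤ 2 * (d + 6) ^ 3 := by nlinarith
  rw [integral_momentBound]
  nlinarith [mul_le_mul_of_nonneg_left h₁ hc₁, mul_le_mul_of_nonneg_left h₂ hc₂]

end MomentBound

/-- If `f` is `L₁`-smooth, `0 < μ ≤ μ′`, and `u, u′` are independent standard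
Gaussian vectors, then
`E[(f(x+μu) − f(x+μ′u′))² ‖u‖²] ≤ 8μ′²(d+4)²‖∇f(x)‖² + 2L₁²μ′⁴(d+6)³`. -/
theorem stmt_10 {S : Type*} [MeasurableSpace S] (P : MeasureTheory.Measure S)
    [MeasureTheory.IsProbabilityMeasure P]
    (d : ℕ) (L₁ : ℝ) (f : Euc d → ℝ)
    (hdiff : Differentiable ℝ f)
    (hsm : ∀ x y : Euc d, ‖gradient f x - gradient f y‖ ≤ L₁ * ‖x - y‖)
    (x : Euc d) (μ μ' : ℝ) (hμ : 0 < μ) (hμμ' : μ ≤ μ')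
    (u u' : S → Euc d) (hu : Measurable u) (hu' : Measurable u')
    (hind : ProbabilityTheory.IndepFun u u' P)
    (hlaw : MeasureTheory.Measure.map u P = stdGaussian d)
    (hlaw' : MeasureTheory.Measure.map u' P = stdGaussian d) :
    ∫ ω, (f (x + μ • u ω) - f (x + μ' • u' ω)) ^ 2 * ‖u ω‖ ^ 2 ∂P
      ≤ 8 * μ' ^ 2 * ((d : ℝ) + 4) ^ 2 * ‖gradient f x‖ ^ 2
        + 2 * L₁ ^ 2 * μ' ^ 4 * ((d : ℝ) + 6) ^ 3 := by
  set c₁ := 4 * μ' ^ 2 * ‖gradient f x‖ ^ 2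
  set c₂ := L₁ ^ 2 * μ' ^ 4
  have hf := hdiff.continuous
  calc ∫ ω, (f (x + μ • u ω) - f (x + μ' • u' ω)) ^ 2 * ‖u ω‖ ^ 2 ∂P
      = ∫ p, (f (x + μ • p.1) - f (x + μ' • p.2)) ^ 2 * ‖p.1‖ ^ 2
          ∂((stdGaussian d).prod (stdGaussian d)) := by
        rw [hind.integral_comp_eq_integral_prod hu.aemeasurable hu'.aemeasurable
          (g := fun p ↦ (f (x + μ • p.1) - f (x + μ' • p.2)) ^ 2 * ‖p.1‖ ^ 2), hlaw, hlaw']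
        exact Continuous.aestronglyMeasurable (by fun_prop)
    _ ≤ ∫ p, momentBound d c₁ c₂ p ∂((stdGaussian d).prod (stdGaussian d)) := by
        refine integral_mono_of_nonneg (.of_forall fun p ↦ by positivity)
          (integrable_momentBound d c₁ c₂) (.of_forall fun p ↦ ?_)
        exact mul_le_mul_of_nonneg_right (sq_sub_smul_sub_smul_le hdiff (fun z ↦ hsm z x)
          hμ.le hμμ' p.1 p.2) (by positivity)
    _ ≤ 2 * c₁ * ((d : ℝ) + 4) ^ 2 + 2 * c₂ * ((d : ℝ) + 6) ^ 3 :=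
        integral_momentBound_le d c₁ c₂ (by positivity) (by positivity)
    _ = _ := by ring

end
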